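/- arXiv:1404.3557 — 2 statements merged into one kernel-verified Lean document; each statement's English description precedes it below -/
import Mathlib

section
/- Suppose w ∈ C²(B) ∩ C(closure B) is a positive solution of -Δw = λ|x|^α(w+1)^p in the unit ball B, with w = 0 on ∂B, where λ > 0, α ≥ 0, p > 1. Let λ_{1,α} > 0 be the first eigenvalue of -Δφ = λ|x|^α φ on B with zero Dirichlet data, with positive eigenfunction φ₁. Then λ·p < λ_{1,α}. -/
open Metric

/-- Laplacian of a real function on ℝ^N: sum of second partial derivatives. -/
noncomputable def laplacian {N : ℕ} (f : EuclideanSpace ℝ (Fin N) → ℝ)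
    (x : EuclideanSpace ℝ (Fin N)) : ℝ :=
  ∑ i : Fin N,
    fderiv ℝ (fun y => fderiv ℝ f y (EuclideanSpace.single i 1)) x
      (EuclideanSpace.single i 1)

/-!
Suppose `λ p ≥ λ₁` and put `δ = λ / (λ₁ max φ₁)`. Whenever `c φ₁ ≤ w`, Bernoulli's inequality
`(w + 1) ^ p ≥ 1 + p w` gives `-Δ (w - (c + δ) φ₁) = |x|^α (λ (w + 1) ^ p - (c + δ) λ₁ φ₁) ≥ 0`,
so the weak minimum principle upgrades the bound to `(c + δ) φ₁ ≤ w`. Iterating from `c = 0`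
yields `n δ φ₁ ≤ w` for every `n`, which is absurd at a point where `φ₁ > 0`.
-/

open Set Filter Topology Bornology
open scoped Laplacian

theorem IsLocalMin.deriv_deriv_nonneg {f : ℝ → ℝ} {a : ℝ} (h : IsLocalMin f a)
    (hf : ContinuousAt f a) : 0 ≤ deriv (deriv f) a := by
  by_contra! hneg
  -- otherwise the second-derivative test makes `a` a local maximum too, so `f` is locally constant
  have hconst : f =ᶠ[𝓝 a] fun _ => f a :=
    (Filter.Eventually.and h (isLocalMax_of_deriv_deriv_neg hneg h.deriv_eq_zero hf)).mono
      fun _ hx => le_antisymm hx.2 hx.1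
  simp [hconst.deriv.deriv_eq] at hneg

theorem IsLocalMin.fderiv_fderiv_apply_self_nonneg {E : Type*} [NormedAddCommGroup E]
    [NormedSpace ℝ E] {g : E → ℝ} {x : E} (h : IsLocalMin g x) (hg : ContDiffAt ℝ 2 g x)
    (e : E) : 0 ≤ fderiv ℝ (fderiv ℝ g) x e e := by
  set L : ℝ → E := fun t => x + t • e
  have hL : ∀ t, HasDerivAt L e t := fun t =>
    (((hasDerivAt_id t).smul_const e).const_add x).congr_deriv (one_smul ℝ e)
  have hL0 : L 0 = x := by simp [L]
  have hLt : Tendsto L (𝓝 0) (𝓝 x) := hL0 ▸ (hL 0).continuousAt.tendsto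
  have hderiv : deriv (g ∘ L) =ᶠ[𝓝 0] fun t => fderiv ℝ g (L t) e := by
    filter_upwards [hLt.eventually (hg.eventually (by simp))] with t ht
    exact ((ht.differentiableAt two_ne_zero).hasFDerivAt.comp_hasDerivAt t (hL t)).deriv
  have hsecond : HasDerivAt (fun t => fderiv ℝ g (L t) e) (fderiv ℝ (fderiv ℝ g) x e e) 0 := by
    have hD : HasFDerivAt (fderiv ℝ g) (fderiv ℝ (fderiv ℝ g) x) (L 0) :=
      hL0 ▸ ((hg.fderiv_right (m := 1) le_rfl).differentiableAt one_ne_zero).hasFDerivAt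
    exact ((hD.clm_apply (hasFDerivAt_const e _)).comp_hasDerivAt 0 (hL 0)).congr_deriv (by simp)
  have hmin : IsLocalMin (g ∘ L) 0 := (hL0 ▸ h).comp_continuous (hL 0).continuousAt
  have hcont : ContinuousAt (g ∘ L) 0 := (hL0 ▸ hg.continuousAt).comp (hL 0).continuousAt
  simpa [hderiv.deriv_eq, hsecond.deriv] using hmin.deriv_deriv_nonneg hcont

section Laplacian

variable {E : Type*} [NormedAddCommGroup E] [InnerProductSpace ℝ E] [FiniteDimensional ℝ E]

theorem IsLocalMin.laplacian_nonneg {g : E → ℝ} {x : E} (h : IsLocalMin g x)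
    (hg : ContDiffAt ℝ 2 g x) : 0 ≤ Δ g x := by
  rw [InnerProductSpace.laplacian_eq_iteratedFDeriv_stdOrthonormalBasis]
  exact Finset.sum_nonneg fun i _ => by
    simpa [iteratedFDeriv_two_apply] using h.fderiv_fderiv_apply_self_nonneg hg _

theorem laplacian_norm_sq (x : E) : Δ (fun y : E => ‖y‖ ^ 2) x = 2 * Module.finrank ℝ E := by
  have hD : fderiv ℝ (fun y : E => ‖y‖ ^ 2) = ⇑(2 • innerSL ℝ : E →L[ℝ] E →L[ℝ] ℝ) :=
    funext fun y => (hasStrictFDerivAt_norm_sq y).hasFDerivAt.fderiv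
  -- over `ℝ` the conjugate-linear `innerSL` can be read as a bilinear map
  have hinner : ∀ v w : E, (innerSL ℝ : E →L[ℝ] E →L[ℝ] ℝ) v w = inner ℝ v w := fun _ _ => rfl
  rw [InnerProductSpace.laplacian_eq_iteratedFDeriv_stdOrthonormalBasis]
  simp only [iteratedFDeriv_two_apply, hD, ContinuousLinearMap.fderiv]
  simp [hinner, mul_comm]

variable {U : Set E}

theorem exists_mem_frontier_le_of_laplacian_neg (hU : IsOpen U) (hUb : IsBounded U)
    {g : E → ℝ} (hC2 : ContDiffOn ℝ 2 g U) (hC0 : ContinuousOn g (closure U))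
    (hlap : ∀ x ∈ U, Δ g x < 0) {x : E} (hx : x ∈ closure U) :
    ∃ y ∈ frontier U, g y ≤ g x := by
  obtain ⟨y, hy, hmin⟩ := hUb.isCompact_closure.exists_isMinOn ⟨x, hx⟩ hC0
  refine ⟨y, ⟨hy, fun hyU => ?_⟩, hmin hx⟩
  rw [hU.interior_eq] at hyU
  have hloc : IsLocalMin g y :=
    hmin.isLocalMin (mem_of_superset (hU.mem_nhds hyU) subset_closure)
  exact (hlap y hyU).not_ge (hloc.laplacian_nonneg (hC2.contDiffAt (hU.mem_nhds hyU)))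

theorem nonneg_of_laplacian_nonpos [Nontrivial E] (hU : IsOpen U) (hUb : IsBounded U)
    {v : E → ℝ} (hC2 : ContDiffOn ℝ 2 v U) (hC0 : ContinuousOn v (closure U))
    (hlap : ∀ x ∈ U, Δ v x ≤ 0) (hbd : ∀ x ∈ frontier U, 0 ≤ v x) :
    ∀ x ∈ closure U, 0 ≤ v x := by
  obtain ⟨R, hR⟩ := isBounded_iff_forall_norm_le.1 hUb.closure
  have hq : ContDiff ℝ 2 fun y : E => ‖y‖ ^ 2 := contDiff_norm_sq ℝ
  intro x hx
  have hperturb : ∀ ε > 0, -(ε * R ^ 2) ≤ v x := by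
    intro ε hε
    -- `v - ε ‖·‖ ^ 2` is strictly superharmonic, so it attains its minimum on the frontier
    have hlap' : ∀ y ∈ U, Δ (v - ε • fun y : E => ‖y‖ ^ 2) y < 0 := fun y hy => by
      have hvy := hC2.contDiffAt (hU.mem_nhds hy)
      have hεq : ContDiffAt ℝ 2 (ε • fun y : E => ‖y‖ ^ 2) y := hq.contDiffAt.const_smul ε
      rw [hvy.laplacian_sub hεq, InnerProductSpace.laplacian_smul ε hq.contDiffAt,
        laplacian_norm_sq, smul_eq_mul]
      have : (0 : ℝ) < Module.finrank ℝ E := by exact_mod_cast Module.finrank_pos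
      nlinarith [hlap y hy]
    obtain ⟨y, hy, hyx⟩ := exists_mem_frontier_le_of_laplacian_neg hU hUb
      (hC2.sub (hq.contDiffOn.const_smul ε))
      (hC0.sub (hq.continuous.continuousOn.const_smul ε)) hlap' hx
    have hyR : ‖y‖ ^ 2 ≤ R ^ 2 :=
      pow_le_pow_left₀ (norm_nonneg y) (hR y (frontier_subset_closure hy)) 2
    simp only [smul_eq_mul] at hyx
    nlinarith [hbd y hy, norm_nonneg x]
  by_contra! hneg
  have := hperturb (-v x / (R ^ 2 + 1)) (div_pos (neg_pos.2 hneg) (by positivity))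
  rw [div_mul_eq_mul_div, neg_le, le_div_iff₀ (by positivity)] at this
  nlinarith

structure IsDirichletSolution (U : Set E) (F : E → ℝ → ℝ) (u : E → ℝ) : Prop where
  contDiffOn : ContDiffOn ℝ 2 u U
  continuousOn : ContinuousOn u (closure U)
  neg_laplacian_eq : ∀ x ∈ U, -Δ u x = F x (u x)
  eq_zero_of_mem_frontier : ∀ x ∈ frontier U, u x = 0

theorem add_mul_mul_le_mul_add_one_rpow {lam mu p c δ w φ : ℝ} (hw : 0 ≤ w) (hp : 1 ≤ p)
    (hlam : 0 ≤ lam) (hmu : 0 ≤ mu) (hmulam : mu ≤ lam * p) (hcw : c * φ ≤ w)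
    (hδ : δ * mu * φ ≤ lam) : (c + δ) * mu * φ ≤ lam * (w + 1) ^ p :=
  calc (c + δ) * mu * φ = mu * (c * φ) + δ * mu * φ := by ring
    _ ≤ lam * p * w + lam :=
      add_le_add ((mul_le_mul_of_nonneg_left hcw hmu).trans
        (mul_le_mul_of_nonneg_right hmulam hw)) hδ
    _ = lam * (1 + p * w) := by ring
    _ ≤ lam * (w + 1) ^ p := by
      rw [add_comm w]
      exact mul_le_mul_of_nonneg_left (one_add_mul_self_le_rpow_one_add (by linarith) hp) hlam

namespace IsDirichletSolution

variable [Nontrivial E] {a w φ : E → ℝ} {lam mu p : ℝ}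

theorem add_mul_le (hU : IsOpen U) (hUb : IsBounded U) (ha : ∀ x ∈ U, 0 ≤ a x)
    (hlam : 0 ≤ lam) (hmu : 0 ≤ mu) (hp : 1 ≤ p) (hmulam : mu ≤ lam * p)
    (hw : IsDirichletSolution U (fun x s => lam * a x * (s + 1) ^ p) w) (hw0 : ∀ x ∈ U, 0 ≤ w x)
    (hφ : IsDirichletSolution U (fun x s => mu * a x * s) φ) {c δ : ℝ}
    (hδ : ∀ x ∈ U, δ * mu * φ x ≤ lam) (hc : ∀ x ∈ U, c * φ x ≤ w x) :
    ∀ x ∈ closure U, (c + δ) * φ x ≤ w x := by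
  have hv := nonneg_of_laplacian_nonpos hU hUb (v := w - (c + δ) • φ)
    (hw.contDiffOn.sub (hφ.contDiffOn.const_smul (c + δ)))
    (hw.continuousOn.sub (hφ.continuousOn.const_smul (c + δ))) ?_ ?_
  · intro x hx
    simpa [sub_nonneg] using hv x hx
  · intro x hx
    have hwx := hw.contDiffOn.contDiffAt (hU.mem_nhds hx)
    have hφx := hφ.contDiffOn.contDiffAt (hU.mem_nhds hx)
    have hcφx : ContDiffAt ℝ 2 ((c + δ) • φ) x := hφx.const_smul (c + δ)
    rw [hwx.laplacian_sub hcφx, InnerProductSpace.laplacian_smul _ hφx, smul_eq_mul,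
      ← neg_neg (Δ w x), ← neg_neg (Δ φ x), hw.neg_laplacian_eq x hx, hφ.neg_laplacian_eq x hx]
    have key := mul_le_mul_of_nonneg_left (add_mul_mul_le_mul_add_one_rpow (hw0 x hx) hp hlam hmu
      hmulam (hc x hx) (hδ x hx)) (ha x hx)
    linarith
  · intro x hx
    simp [hw.eq_zero_of_mem_frontier x hx, hφ.eq_zero_of_mem_frontier x hx]

theorem nat_mul_le (hU : IsOpen U) (hUb : IsBounded U) (ha : ∀ x ∈ U, 0 ≤ a x)
    (hlam : 0 ≤ lam) (hmu : 0 ≤ mu) (hp : 1 ≤ p) (hmulam : mu ≤ lam * p)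
    (hw : IsDirichletSolution U (fun x s => lam * a x * (s + 1) ^ p) w) (hw0 : ∀ x ∈ U, 0 ≤ w x)
    (hφ : IsDirichletSolution U (fun x s => mu * a x * s) φ) {δ : ℝ}
    (hδ : ∀ x ∈ U, δ * mu * φ x ≤ lam) (n : ℕ) : ∀ x ∈ U, n * δ * φ x ≤ w x := by
  induction n with
  | zero => simpa using hw0
  | succ n ih =>
    intro x hx
    have := add_mul_le hU hUb ha hlam hmu hp hmulam hw hw0 hφ hδ ih x (subset_closure hx)
    push_cast
    linarith

theorem mul_lt (hU : IsOpen U) (hUb : IsBounded U) (ha : ∀ x ∈ U, 0 ≤ a x)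
    (hlam : 0 < lam) (hmu : 0 < mu) (hp : 1 ≤ p)
    (hw : IsDirichletSolution U (fun x s => lam * a x * (s + 1) ^ p) w) (hw0 : ∀ x ∈ U, 0 ≤ w x)
    (hφ : IsDirichletSolution U (fun x s => mu * a x * s) φ) {x₀ : E} (hx₀ : x₀ ∈ U)
    (hφx₀ : 0 < φ x₀) : lam * p < mu := by
  by_contra! hmulam
  obtain ⟨xM, -, hmax⟩ :=
    hUb.isCompact_closure.exists_isMaxOn ⟨x₀, subset_closure hx₀⟩ hφ.continuousOn
  have hM : 0 < φ xM := hφx₀.trans_le (hmax (subset_closure hx₀))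
  set δ := lam / (mu * φ xM)
  have hδ : ∀ x ∈ U, δ * mu * φ x ≤ lam := fun x hx =>
    calc δ * mu * φ x ≤ δ * mu * φ xM :=
          mul_le_mul_of_nonneg_left (hmax (subset_closure hx)) (by positivity)
      _ = lam := by simp only [δ]; field_simp
  obtain ⟨n, hn⟩ := exists_nat_gt (w x₀ / (δ * φ x₀))
  rw [div_lt_iff₀ (by positivity)] at hn
  have := nat_mul_le hU hUb ha hlam.le hmu.le hp hmulam hw hw0 hφ hδ n x₀ hx₀
  linarith

end IsDirichletSolution

theorem ContDiffAt.laplacian_eq_laplacian {N : ℕ} {f : EuclideanSpace ℝ (Fin N) → ℝ}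
    {x : EuclideanSpace ℝ (Fin N)} (hf : ContDiffAt ℝ 2 f x) : laplacian f x = Δ f x := by
  rw [InnerProductSpace.laplacian_eq_iteratedFDeriv_orthonormalBasis f
    (EuclideanSpace.basisFun (Fin N) ℝ)]
  refine Finset.sum_congr rfl fun i _ => ?_
  have hD : DifferentiableAt ℝ (fderiv ℝ f) x :=
    (hf.fderiv_right (m := 1) le_rfl).differentiableAt one_ne_zero
  simp [iteratedFDeriv_two_apply, fderiv_clm_apply hD (differentiableAt_const _)]

theorem isDirichletSolution_ball {N : ℕ} {c : EuclideanSpace ℝ (Fin N)} {r : ℝ} (hr : r ≠ 0)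
    {F : EuclideanSpace ℝ (Fin N) → ℝ → ℝ} {u : EuclideanSpace ℝ (Fin N) → ℝ}
    (hC2 : ContDiffOn ℝ 2 u (ball c r)) (hC0 : ContinuousOn u (closedBall c r))
    (heq : ∀ x ∈ ball c r, -laplacian u x = F x (u x)) (hbd : ∀ x ∈ sphere c r, u x = 0) :
    IsDirichletSolution (ball c r) F u where
  contDiffOn := hC2
  continuousOn := by rwa [closure_ball c hr]
  neg_laplacian_eq x hx := by
    rw [← (hC2.contDiffAt (isOpen_ball.mem_nhds hx)).laplacian_eq_laplacian, heq x hx]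
  eq_zero_of_mem_frontier := by rwa [frontier_ball c hr]

theorem stmt_3_general (N : ℕ) (hN : 1 ≤ N) (lam lam1 α p : ℝ)
    (hlam : 0 < lam) (hlam1 : 0 < lam1) (hp : 1 < p)
    (w φ₁ : EuclideanSpace ℝ (Fin N) → ℝ)
    -- w is a positive classical solution
    (hwC2 : ContDiffOn ℝ 2 w (ball (0 : EuclideanSpace ℝ (Fin N)) 1))
    (hwC0 : ContinuousOn w (closedBall (0 : EuclideanSpace ℝ (Fin N)) 1))
    (hwpos : ∀ x ∈ ball (0 : EuclideanSpace ℝ (Fin N)) 1, 0 < w x)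
    (hweq : ∀ x ∈ ball (0 : EuclideanSpace ℝ (Fin N)) 1,
      -laplacian w x = lam * ‖x‖ ^ α * (w x + 1) ^ p)
    (hwbd : ∀ x ∈ sphere (0 : EuclideanSpace ℝ (Fin N)) 1, w x = 0)
    -- φ₁ is a positive first eigenfunction with eigenvalue lam1
    (hφC2 : ContDiffOn ℝ 2 φ₁ (ball (0 : EuclideanSpace ℝ (Fin N)) 1))
    (hφC0 : ContinuousOn φ₁ (closedBall (0 : EuclideanSpace ℝ (Fin N)) 1))
    (hφpos : ∀ x ∈ ball (0 : EuclideanSpace ℝ (Fin N)) 1, 0 < φ₁ x)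
    (hφeq : ∀ x ∈ ball (0 : EuclideanSpace ℝ (Fin N)) 1,
      -laplacian φ₁ x = lam1 * ‖x‖ ^ α * φ₁ x)
    (hφbd : ∀ x ∈ sphere (0 : EuclideanSpace ℝ (Fin N)) 1, φ₁ x = 0) :
    lam * p < lam1 := by
  have : Nonempty (Fin N) := ⟨⟨0, hN⟩⟩
  have hw := isDirichletSolution_ball (F := fun x s => lam * ‖x‖ ^ α * (s + 1) ^ p)
    one_ne_zero hwC2 hwC0 hweq hwbd
  have hφ := isDirichletSolution_ball (F := fun x s => lam1 * ‖x‖ ^ α * s)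
    one_ne_zero hφC2 hφC0 hφeq hφbd
  have h0 : (0 : EuclideanSpace ℝ (Fin N)) ∈ ball 0 1 := mem_ball_self one_pos
  exact IsDirichletSolution.mul_lt isOpen_ball isBounded_ball (fun x _ => by positivity) hlam
    hlam1 hp.le hw (fun x hx => (hwpos x hx).le) hφ h0 (hφpos 0 h0)

/-- if w is a positive classical solution of
-Δw = λ|x|^α(w+1)^p in the unit ball with zero boundary data, and λ_{1,α} is
the first eigenvalue of -Δφ = λ|x|^α φ with positive eigenfunction φ₁, then
λ·p < λ_{1,α}. -/
theorem stmt_3 (N : ℕ) (hN : 1 ≤ N) (lam lam1 α p : ℝ)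
    (hlam : 0 < lam) (hlam1 : 0 < lam1) (hα : 0 ≤ α) (hp : 1 < p)
    (w φ₁ : EuclideanSpace ℝ (Fin N) → ℝ)
    -- w is a positive classical solution
    (hwC2 : ContDiffOn ℝ 2 w (ball (0 : EuclideanSpace ℝ (Fin N)) 1))
    (hwC0 : ContinuousOn w (closedBall (0 : EuclideanSpace ℝ (Fin N)) 1))
    (hwpos : ∀ x ∈ ball (0 : EuclideanSpace ℝ (Fin N)) 1, 0 < w x)
    (hweq : ∀ x ∈ ball (0 : EuclideanSpace ℝ (Fin N)) 1,
      -laplacian w x = lam * ‖x‖ ^ α * (w x + 1) ^ p)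
    (hwbd : ∀ x ∈ sphere (0 : EuclideanSpace ℝ (Fin N)) 1, w x = 0)
    -- φ₁ is a positive first eigenfunction with eigenvalue lam1
    (hφC2 : ContDiffOn ℝ 2 φ₁ (ball (0 : EuclideanSpace ℝ (Fin N)) 1))
    (hφC0 : ContinuousOn φ₁ (closedBall (0 : EuclideanSpace ℝ (Fin N)) 1))
    (hφpos : ∀ x ∈ ball (0 : EuclideanSpace ℝ (Fin N)) 1, 0 < φ₁ x)
    (hφeq : ∀ x ∈ ball (0 : EuclideanSpace ℝ (Fin N)) 1,
      -laplacian φ₁ x = lam1 * ‖x‖ ^ α * φ₁ x)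
    (hφbd : ∀ x ∈ sphere (0 : EuclideanSpace ℝ (Fin N)) 1, φ₁ x = 0) :
    lam * p < lam1 :=
  stmt_3_general N hN lam lam1 α p hlam hlam1 hp w φ₁ hwC2 hwC0 hwpos hweq hwbd hφC2 hφC0 hφpos hφeq
    hφbd
end Laplacian
end

section
/- Let N ≥ 3 and u ∈ H¹_{0,rad}(B) with B the unit ball. Set 2*_α = 2(N+α)/(N-2) for α ≥ 0 and let S be the best constant in the Sobolev embedding H¹₀(B) ↪ L^{2*}(B). Then (∫_B |u|^{2*_α} |x|^α dx)^{1/2*_α} ≤ S^{N/(2(N+α))} · ((N-2)ω_{N-1})^{-α/(2(N+α))} · (∫_B |∇u|² dx)^{1/2}, where ω_{N-1} is the surface area of the unit sphere. -/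
open Metric MeasureTheory Set
open scoped Interval

set_option maxHeartbeats 1000000

/-- uniform-in-α bound on the embedding constant of
H¹_{0,rad}(B) ↪ L^{2*_α}(B, |x|^α dx). Here S is the best constant in the
Sobolev embedding H¹₀(B) ↪ L^{2*}(B), ω_{N-1} = N·vol(B) the surface area of
the unit sphere, and u is a radial test function on the unit ball. -/
theorem stmt_14 (N : ℕ) (hN : 3 ≤ N) (α : ℝ) (hα : 0 ≤ α) (S : ℝ) (hS : 0 < S)
    -- S is a Sobolev constant: ∫|v|^{2*} ≤ S^{N/(N-2)} ‖∇v‖₂^{2*}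
    (hSob : ∀ v : EuclideanSpace ℝ (Fin N) → ℝ,
      ContDiff ℝ (⊤ : ℕ∞) v → tsupport v ⊆ ball (0 : EuclideanSpace ℝ (Fin N)) 1 →
      (∫ x in ball (0 : EuclideanSpace ℝ (Fin N)) 1,
          |v x| ^ (2 * (N : ℝ) / ((N : ℝ) - 2)))
        ≤ S ^ ((N : ℝ) / ((N : ℝ) - 2))
            * (∫ x in ball (0 : EuclideanSpace ℝ (Fin N)) 1, ‖fderiv ℝ v x‖ ^ 2)
                ^ ((N : ℝ) / ((N : ℝ) - 2)))
    (u : EuclideanSpace ℝ (Fin N) → ℝ)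
    (hu : ContDiff ℝ (⊤ : ℕ∞) u)
    (hsupp : tsupport u ⊆ ball (0 : EuclideanSpace ℝ (Fin N)) 1)
    (hrad : ∃ g : ℝ → ℝ, ∀ x, u x = g ‖x‖) :
    (∫ x in ball (0 : EuclideanSpace ℝ (Fin N)) 1,
        |u x| ^ (2 * ((N : ℝ) + α) / ((N : ℝ) - 2)) * ‖x‖ ^ α)
      ^ (((N : ℝ) - 2) / (2 * ((N : ℝ) + α)))
    ≤ S ^ ((N : ℝ) / (2 * ((N : ℝ) + α)))
        * ((((N : ℝ) - 2)
              * ((N : ℝ) * (volume (ball (0 : EuclideanSpace ℝ (Fin N)) 1)).toReal))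
            ^ (-(α / (2 * ((N : ℝ) + α)))))
        * (∫ x in ball (0 : EuclideanSpace ℝ (Fin N)) 1, ‖fderiv ℝ u x‖ ^ 2)
            ^ ((1 : ℝ) / 2) := by
  classical
  have hN3 : (3:ℝ) ≤ (N:ℝ) := by exact_mod_cast hN
  have hn2 : (0:ℝ) < (N:ℝ) - 2 := by linarith
  have hNα : (0:ℝ) < (N:ℝ) + α := by linarith
  haveI : NeZero N := ⟨by omega⟩
  obtain ⟨g₀, hg₀⟩ := hrad
  set B : Set (EuclideanSpace ℝ (Fin N)) := ball 0 1 with hBdef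
  set D : ℝ := ∫ x in B, ‖fderiv ℝ u x‖ ^ 2 with hDdef
  have hD0 : 0 ≤ D := integral_nonneg fun x => sq_nonneg _
  set ω : ℝ := (N:ℝ) * (volume B).toReal with hωdef
  have hωpos : 0 < ω := by
    apply mul_pos (by positivity)
    rw [ENNReal.toReal_pos_iff]
    exact ⟨by rw [hBdef]; exact measure_ball_pos _ _ one_pos,
      by rw [hBdef]; exact measure_ball_lt_top⟩
  set A : ℝ := ((N:ℝ) - 2) * ω with hAdef
  have hApos : 0 < A := mul_pos hn2 hωpos
  -- the radial profile
  set e₁ : EuclideanSpace ℝ (Fin N) := EuclideanSpace.single 0 1 with he₁def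
  have he₁ : ‖e₁‖ = 1 := by simp [he₁def]
  haveI : Nontrivial (EuclideanSpace ℝ (Fin N)) :=
    ⟨e₁, 0, fun h => by rw [h] at he₁; simp at he₁⟩
  have hae : ∀ᵐ x : EuclideanSpace ℝ (Fin N), x ≠ 0 := by
    rw [ae_iff]
    have : {x : EuclideanSpace ℝ (Fin N) | ¬ x ≠ 0} = {0} := by ext x; simp
    rw [this]
    exact measure_singleton 0
  set g : ℝ → ℝ := fun t => u (t • e₁) with hgdef
  have hgsmooth : ContDiff ℝ (⊤ : ℕ∞) g := hu.comp (contDiff_id.smul contDiff_const)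
  have hgv : ∀ v : EuclideanSpace ℝ (Fin N), ‖v‖ = 1 → ∀ t : ℝ, g t = u (t • v) := by
    intro v hv t
    rw [hgdef]; simp only
    rw [hg₀, hg₀, norm_smul, norm_smul, he₁, hv]
  have hgx : ∀ x, u x = g ‖x‖ := by
    intro x
    rw [hgdef]; simp only
    rw [hg₀, hg₀, norm_smul, he₁, Real.norm_eq_abs, abs_norm, mul_one]
  have hg'cont : Continuous (deriv g) := hgsmooth.continuous_deriv (by simp)
  have hgderiv : ∀ v : EuclideanSpace ℝ (Fin N), ‖v‖ = 1 → ∀ t : ℝ,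
      HasDerivAt g (fderiv ℝ u (t • v) v) t := by
    intro v hv t
    have h1 : HasDerivAt (fun s : ℝ => s • v) v t := by
      simpa using (hasDerivAt_id t).smul_const v
    have h2 := ((hu.differentiable (by simp)) (t • v)).hasFDerivAt.comp_hasDerivAt t h1
    have : g = fun s : ℝ => u (s • v) := funext fun s => hgv v hv s
    rw [this]; exact h2
  have hg'le : ∀ x : EuclideanSpace ℝ (Fin N), x ≠ 0 → |deriv g ‖x‖| ≤ ‖fderiv ℝ u x‖ := by
    intro x hx
    have hnx : ‖x‖ ≠ 0 := norm_ne_zero_iff.mpr hx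
    set v : EuclideanSpace ℝ (Fin N) := ‖x‖⁻¹ • x with hvdef
    have hv : ‖v‖ = 1 := by
      rw [hvdef, norm_smul, norm_inv, norm_norm, inv_mul_cancel₀ hnx]
    have hxv : ‖x‖ • v = x := by
      rw [hvdef, smul_smul, mul_inv_cancel₀ hnx, one_smul]
    have hd := (hgderiv v hv ‖x‖).deriv
    rw [hd, hxv]
    calc |(fderiv ℝ u x) v| = ‖(fderiv ℝ u x) v‖ := (Real.norm_eq_abs _).symm
      _ ≤ ‖fderiv ℝ u x‖ * ‖v‖ := (fderiv ℝ u x).le_opNorm v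
      _ = ‖fderiv ℝ u x‖ := by rw [hv, mul_one]
  have hgout : ∀ t : ℝ, 1 ≤ |t| → g t = 0 := by
    intro t ht
    rw [hgdef]; simp only
    apply image_eq_zero_of_notMem_tsupport
    intro hmem
    have := hsupp hmem
    rw [hBdef, mem_ball, dist_zero_right, norm_smul, he₁, Real.norm_eq_abs, mul_one] at this
    linarith
  have hg1 : g 1 = 0 := hgout 1 (by norm_num)
  have hg'out : ∀ t : ℝ, 1 < t → deriv g t = 0 := by
    intro t ht
    have hev : g =ᶠ[nhds t] (fun _ => (0:ℝ)) := by
      filter_upwards [Ioi_mem_nhds ht] with s hs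
      have h1s : (1:ℝ) < s := mem_Ioi.mp hs
      exact hgout s (by rw [abs_of_pos (by linarith)]; linarith)
    rw [hev.deriv_eq, deriv_const]
  -- radial energy
  set W : ℝ := ∫ y in Ioi (0:ℝ), y ^ (N-1) * (deriv g y)^2 with hWdef
  have hFcont : Continuous (fun y : ℝ => y ^ (N-1) * (deriv g y)^2) :=
    (continuous_pow _).mul (hg'cont.pow 2)
  have hWint : IntegrableOn (fun y : ℝ => y ^ (N-1) * (deriv g y)^2) (Ioi (0:ℝ)) := by
    rw [← Ioc_union_Ioi_eq_Ioi (zero_le_one)]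
    apply IntegrableOn.union
    · exact (hFcont.continuousOn.integrableOn_Icc).mono_set Ioc_subset_Icc_self
    · have heq : EqOn (fun y : ℝ => y ^ (N-1) * (deriv g y)^2) (fun _ => (0:ℝ)) (Ioi (1:ℝ)) :=
        fun y hy => by simp [hg'out y (mem_Ioi.mp hy)]
      exact (integrableOn_congr_fun heq measurableSet_Ioi).mpr (integrableOn_zero)
  have hW0 : 0 ≤ W := by
    apply setIntegral_nonneg measurableSet_Ioi
    intro y hy
    have : 0 < y := mem_Ioi.mp hy
    positivity
  have hWD : ω * W ≤ D := by
    have hpolar := integral_fun_norm_addHaar (volume : Measure (EuclideanSpace ℝ (Fin N)))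
        (fun y => (deriv g y)^2)
    rw [finrank_euclideanSpace_fin] at hpolar
    simp only [nsmul_eq_mul, smul_eq_mul] at hpolar
    have hsupp1 : HasCompactSupport (fun x : EuclideanSpace ℝ (Fin N) => (deriv g ‖x‖)^2) := by
      apply HasCompactSupport.intro (isCompact_closedBall (0:EuclideanSpace ℝ (Fin N)) 1)
      intro x hx
      have h1x : 1 < ‖x‖ := by simpa [mem_closedBall, dist_zero_right, not_le] using hx
      simp [hg'out _ h1x]
    have int1 : Integrable (fun x : EuclideanSpace ℝ (Fin N) => (deriv g ‖x‖)^2) :=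
      ((hg'cont.comp continuous_norm).pow 2).integrable_of_hasCompactSupport hsupp1
    have hfd0 : ∀ x : EuclideanSpace ℝ (Fin N), x ∉ B → fderiv ℝ u x = 0 := by
      intro x hx
      have hxs : x ∉ tsupport u := fun h => hx (hsupp h)
      exact Function.notMem_support.mp (fun hc => hxs (support_fderiv_subset ℝ hc))
    have hsupp2 : HasCompactSupport (fun x : EuclideanSpace ℝ (Fin N) => ‖fderiv ℝ u x‖^2) := by
      apply HasCompactSupport.intro (isCompact_closedBall (0:EuclideanSpace ℝ (Fin N)) 1)
      intro x hx
      have : x ∉ B := fun h => hx (ball_subset_closedBall h)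
      simp [hfd0 x this]
    have int2 : Integrable (fun x : EuclideanSpace ℝ (Fin N) => ‖fderiv ℝ u x‖^2) :=
      (((hu.continuous_fderiv (by simp)).norm).pow 2).integrable_of_hasCompactSupport hsupp2
    have h1 : (∫ x : EuclideanSpace ℝ (Fin N), (deriv g ‖x‖)^2)
        ≤ ∫ x : EuclideanSpace ℝ (Fin N), ‖fderiv ℝ u x‖^2 := by
      apply integral_mono_ae int1 int2
      filter_upwards [hae] with x hx
      calc (deriv g ‖x‖)^2 = |deriv g ‖x‖|^2 := (sq_abs _).symm
        _ ≤ ‖fderiv ℝ u x‖^2 := pow_le_pow_left₀ (abs_nonneg _) (hg'le x hx) 2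
    have h2 : (∫ x in B, ‖fderiv ℝ u x‖^2) = ∫ x : EuclideanSpace ℝ (Fin N), ‖fderiv ℝ u x‖^2 :=
      setIntegral_eq_integral_of_forall_compl_eq_zero (fun x hx => by simp [hfd0 x hx])
    calc ω * W = ∫ x : EuclideanSpace ℝ (Fin N), (deriv g ‖x‖)^2 := by
          rw [hpolar, hωdef, hWdef, hBdef, measureReal_def]; ring
      _ ≤ ∫ x : EuclideanSpace ℝ (Fin N), ‖fderiv ℝ u x‖^2 := h1
      _ = D := by rw [hDdef, h2]
  -- Ni's inequality
  have hNi : ∀ x : EuclideanSpace ℝ (Fin N), x ≠ 0 → ‖x‖ < 1 →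
      |u x| * ‖x‖ ^ (((N:ℝ)-2)/2) ≤ Real.sqrt (D / A) := by
    intro x hx0 hx1
    have hr0 : (0:ℝ) < ‖x‖ := norm_pos_iff.mpr hx0
    set r : ℝ := ‖x‖ with hrdef
    have hr1 : r ≤ 1 := le_of_lt hx1
    have hftc : ∫ t in r..1, deriv g t = g 1 - g r :=
      intervalIntegral.integral_deriv_eq_sub
        (fun t _ => (hgsmooth.differentiable (by simp)).differentiableAt)
        (hg'cont.intervalIntegrable r 1)
    have habs : |u x| ≤ ∫ t in Ioc r 1, |deriv g t| := by
      rw [hgx x, ← hrdef]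
      have hgr : g r = -∫ t in Ioc r 1, deriv g t := by
        rw [← intervalIntegral.integral_of_le hr1, hftc, hg1]; ring
      rw [hgr, abs_neg]
      simpa [Real.norm_eq_abs] using
        norm_integral_le_integral_norm (μ := volume.restrict (Ioc r 1)) (deriv g)
    -- Cauchy-Schwarz
    haveI hfin : IsFiniteMeasure (volume.restrict (Ioc r 1)) :=
      ⟨by rw [Measure.restrict_apply_univ]; exact measure_Ioc_lt_top⟩
    set f1 : ℝ → ℝ := fun t => deriv g t * t ^ (((N:ℝ)-1)/2) with hf1def
    set f2 : ℝ → ℝ := fun t => t ^ (((1:ℝ)-N)/2) with hf2def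
    have hf1cont : Continuous f1 := hg'cont.mul
      (continuous_id.rpow_const (fun t => Or.inr (by linarith)))
    have hmem1 : MemLp f1 (ENNReal.ofReal 2) (volume.restrict (Ioc r 1)) := by
      obtain ⟨C, hC⟩ := (isCompact_Icc (a := r) (b := 1)).exists_bound_of_continuousOn
        hf1cont.continuousOn
      apply MemLp.of_bound hf1cont.aestronglyMeasurable C
      filter_upwards [ae_restrict_mem measurableSet_Ioc] with t ht
      exact hC t (Ioc_subset_Icc_self ht)
    have hmem2 : MemLp f2 (ENNReal.ofReal 2) (volume.restrict (Ioc r 1)) := by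
      have hf2m : AEStronglyMeasurable f2 (volume.restrict (Ioc r 1)) := by
        apply ContinuousOn.aestronglyMeasurable _ measurableSet_Ioc
        intro t ht
        exact (Real.continuousAt_rpow_const t _ (Or.inl (ne_of_gt (hr0.trans ht.1)))).continuousWithinAt
      apply MemLp.of_bound hf2m (r ^ (((1:ℝ)-N)/2))
      filter_upwards [ae_restrict_mem measurableSet_Ioc] with t ht
      have ht0 : 0 < t := hr0.trans ht.1
      rw [hf2def, Real.norm_eq_abs, abs_of_nonneg (Real.rpow_nonneg ht0.le _)]
      exact Real.rpow_le_rpow_of_nonpos hr0 ht.1.le (by linarith)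
    have hCS := integral_mul_norm_le_Lp_mul_Lq (μ := volume.restrict (Ioc r 1))
      (f := f1) (g := f2) (p := 2) (q := 2) ⟨by norm_num, by norm_num, by norm_num⟩ hmem1 hmem2
    -- identify the three integrals
    have hE1 : ∫ t in Ioc r 1, ‖f1 t‖ * ‖f2 t‖ = ∫ t in Ioc r 1, |deriv g t| := by
      apply setIntegral_congr_fun measurableSet_Ioc
      intro t ht
      have ht0 : 0 < t := hr0.trans ht.1
      show ‖f1 t‖ * ‖f2 t‖ = |deriv g t|
      rw [hf1def, hf2def]
      simp only [Real.norm_eq_abs, abs_mul, abs_of_nonneg (Real.rpow_nonneg ht0.le _)]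
      rw [mul_assoc, ← Real.rpow_add ht0,
        show ((N:ℝ)-1)/2 + ((1:ℝ)-N)/2 = 0 by ring, Real.rpow_zero, mul_one]
    have hE2 : ∫ t in Ioc r 1, ‖f1 t‖ ^ (2:ℝ) = ∫ t in Ioc r 1, t ^ (N-1) * (deriv g t)^2 := by
      apply setIntegral_congr_fun measurableSet_Ioc
      intro t ht
      have ht0 : 0 < t := hr0.trans ht.1
      show ‖f1 t‖ ^ (2:ℝ) = t ^ (N-1) * (deriv g t)^2
      rw [hf1def, Real.rpow_two, Real.norm_eq_abs, sq_abs, mul_pow,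
        ← Real.rpow_natCast (t ^ (((N:ℝ)-1)/2)) 2, ← Real.rpow_mul ht0.le,
        show ((N:ℝ)-1)/2 * ((2:ℕ):ℝ) = ((N - 1 : ℕ) : ℝ) by
          rw [Nat.cast_sub (by omega : 1 ≤ N)]; push_cast; ring,
        Real.rpow_natCast]
      ring
    have hE3 : ∫ t in Ioc r 1, ‖f2 t‖ ^ (2:ℝ) = ∫ t in Ioc r 1, t ^ ((1:ℝ) - N) := by
      apply setIntegral_congr_fun measurableSet_Ioc
      intro t ht
      have ht0 : 0 < t := hr0.trans ht.1
      show ‖f2 t‖ ^ (2:ℝ) = t ^ ((1:ℝ) - N)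
      rw [hf2def, Real.rpow_two, Real.norm_eq_abs, sq_abs,
        ← Real.rpow_natCast (t ^ (((1:ℝ)-N)/2)) 2, ← Real.rpow_mul ht0.le,
        show ((1:ℝ)-N)/2 * ((2:ℕ):ℝ) = (1:ℝ) - N by push_cast; ring]
    set X : ℝ := ∫ t in Ioc r 1, t ^ (N-1) * (deriv g t)^2 with hXdef
    set Y : ℝ := ∫ t in Ioc r 1, t ^ ((1:ℝ)-N) with hYdef
    have hX0 : 0 ≤ X := setIntegral_nonneg measurableSet_Ioc fun t ht =>
      mul_nonneg (pow_nonneg (hr0.trans ht.1).le _) (sq_nonneg _)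
    have hY0 : 0 ≤ Y := setIntegral_nonneg measurableSet_Ioc fun t ht =>
      Real.rpow_nonneg (hr0.trans ht.1).le _
    have hCS' : (∫ t in Ioc r 1, |deriv g t|) ≤ X ^ (1/2:ℝ) * Y ^ (1/2:ℝ) := by
      rw [← hE1, ← hE2, ← hE3]
      exact hCS
    -- bound X
    have hXb : X ≤ D / ω := by
      have h1 : X ≤ W := by
        rw [hXdef, hWdef]
        apply setIntegral_mono_set hWint
        · filter_upwards [ae_restrict_mem measurableSet_Ioi] with y hy
          have : (0:ℝ) < y := mem_Ioi.mp hy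
          positivity
        · exact HasSubset.Subset.eventuallyLE (fun y (hy : y ∈ Ioc r 1) => hr0.trans hy.1)
      have h2 : W ≤ D / ω := (le_div_iff₀ hωpos).mpr (by linarith [hWD])
      linarith
    -- bound Y
    have hYb : Y ≤ r ^ ((2:ℝ) - N) / ((N:ℝ) - 2) := by
      have h0 : (0:ℝ) ∉ [[r, 1]] := by
        rw [Set.uIcc_of_le hr1]
        intro hmem
        exact (not_le.mpr hr0) hmem.1
      have hint := integral_rpow (a := r) (b := 1) (r := (1:ℝ)-N)
        (Or.inr ⟨by intro h; rw [show (1:ℝ) - N = -1 ↔ (N:ℝ) = 2 by constructor <;> intro <;> linarith] at h; linarith, h0⟩)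
      rw [hYdef, ← intervalIntegral.integral_of_le hr1, hint,
        show (1:ℝ) - N + 1 = 2 - N by ring, Real.one_rpow]
      have hXge : (1:ℝ) ≤ r ^ ((2:ℝ) - N) := by
        calc (1:ℝ) = r ^ (0:ℝ) := (Real.rpow_zero r).symm
          _ ≤ r ^ ((2:ℝ) - N) := Real.rpow_le_rpow_of_exponent_ge hr0 hr1 (by linarith)
      have heq : (1 - r ^ ((2:ℝ)-N)) / (2 - (N:ℝ)) = (r ^ ((2:ℝ)-N) - 1) / ((N:ℝ) - 2) := by
        rw [div_eq_div_iff (by linarith) (by linarith)]; ring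
      rw [heq]
      gcongr
      linarith
    -- assemble
    have hsqfact : ∀ Z : ℝ, 0 ≤ Z → (Z ^ (1/2:ℝ))^2 = Z := by
      intro Z hZ
      rw [← Real.rpow_natCast (Z ^ (1/2:ℝ)) 2, ← Real.rpow_mul hZ]
      norm_num
    have hI0 : 0 ≤ ∫ t in Ioc r 1, |deriv g t| :=
      setIntegral_nonneg measurableSet_Ioc fun t _ => abs_nonneg _
    have hkey : (|u x| * r ^ (((N:ℝ)-2)/2))^2 ≤ D / A := by
      have h2 : (r ^ (((N:ℝ)-2)/2))^2 = r ^ ((N:ℝ)-2) := by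
        rw [← Real.rpow_natCast (r ^ (((N:ℝ)-2)/2)) 2, ← Real.rpow_mul hr0.le,
          show ((N:ℝ)-2)/2 * ((2:ℕ):ℝ) = (N:ℝ)-2 by push_cast; ring]
      have step1 : (|u x| * r ^ (((N:ℝ)-2)/2))^2 ≤ (X * Y) * r ^ ((N:ℝ)-2) := by
        rw [mul_pow, h2]
        apply mul_le_mul_of_nonneg_right _ (Real.rpow_nonneg hr0.le _)
        calc |u x|^2 ≤ (∫ t in Ioc r 1, |deriv g t|)^2 :=
              pow_le_pow_left₀ (abs_nonneg _) habs 2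
          _ ≤ (X ^ (1/2:ℝ) * Y ^ (1/2:ℝ))^2 := pow_le_pow_left₀ hI0 hCS' 2
          _ = X * Y := by rw [mul_pow, hsqfact X hX0, hsqfact Y hY0]
      have step2 : (X * Y) * r ^ ((N:ℝ)-2) ≤ ((D/ω) * (r ^ ((2:ℝ)-N) / ((N:ℝ)-2))) * r ^ ((N:ℝ)-2) := by
        apply mul_le_mul_of_nonneg_right _ (Real.rpow_nonneg hr0.le _)
        exact mul_le_mul hXb hYb hY0 (div_nonneg hD0 hωpos.le)
      have step3 : ((D/ω) * (r ^ ((2:ℝ)-N) / ((N:ℝ)-2))) * r ^ ((N:ℝ)-2) = D / A := by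
        have hrr : r ^ ((2:ℝ)-N) * r ^ ((N:ℝ)-2) = 1 := by
          rw [← Real.rpow_add hr0, show (2:ℝ)-N + ((N:ℝ)-2) = 0 by ring, Real.rpow_zero]
        calc ((D/ω) * (r ^ ((2:ℝ)-N) / ((N:ℝ)-2))) * r ^ ((N:ℝ)-2)
            = (D / A) * (r ^ ((2:ℝ)-N) * r ^ ((N:ℝ)-2)) := by
              rw [hAdef]; field_simp
          _ = D / A := by rw [hrr, mul_one]
      linarith
    exact (Real.le_sqrt (mul_nonneg (abs_nonneg _) (Real.rpow_nonneg hr0.le _))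
      (div_nonneg hD0 hApos.le)).mpr hkey
  -- main argument
  set C : ℝ := Real.sqrt (D / A) with hCdef
  have hC0 : 0 ≤ C := Real.sqrt_nonneg _
  have hq : (0:ℝ) < 2 * ((N:ℝ) + α) / ((N:ℝ) - 2) := by positivity
  have hp : (0:ℝ) < ((N:ℝ) - 2) / (2 * ((N:ℝ) + α)) := by positivity
  have hballmeas : MeasurableSet B := by rw [hBdef]; exact measurableSet_ball
  have hI1nonneg : 0 ≤ ∫ x in B, |u x| ^ (2 * ((N:ℝ) + α) / ((N:ℝ) - 2)) * ‖x‖ ^ α := by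
    apply setIntegral_nonneg hballmeas
    intro x _
    exact mul_nonneg (Real.rpow_nonneg (abs_nonneg _) _) (Real.rpow_nonneg (norm_nonneg _) _)
  -- pointwise bound
  have hptwise : ∀ᵐ x ∂(volume.restrict B),
      |u x| ^ (2 * ((N:ℝ) + α) / ((N:ℝ) - 2)) * ‖x‖ ^ α
        ≤ C ^ (2*α/((N:ℝ)-2)) * |u x| ^ (2 * (N:ℝ) / ((N:ℝ) - 2)) := by
    filter_upwards [ae_restrict_mem hballmeas, ae_restrict_of_ae hae] with x hxB hx0
    have hx1 : ‖x‖ < 1 := by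
      rw [hBdef] at hxB
      simpa [mem_ball, dist_zero_right] using hxB
    have hNi' := hNi x hx0 hx1
    have hexp : 2 * ((N:ℝ) + α) / ((N:ℝ) - 2) = 2 * (N:ℝ) / ((N:ℝ) - 2) + 2*α/((N:ℝ)-2) := by
      field_simp
    calc |u x| ^ (2 * ((N:ℝ) + α) / ((N:ℝ) - 2)) * ‖x‖ ^ α
        = |u x| ^ (2 * (N:ℝ) / ((N:ℝ) - 2))
            * ((|u x| * ‖x‖ ^ (((N:ℝ)-2)/2)) ^ (2*α/((N:ℝ)-2))) := by
          rw [hexp, Real.rpow_add' (abs_nonneg _) (by positivity),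
            Real.mul_rpow (abs_nonneg _) (Real.rpow_nonneg (norm_nonneg _) _),
            ← Real.rpow_mul (norm_nonneg _),
            show ((N:ℝ)-2)/2 * (2*α/((N:ℝ)-2)) = α by field_simp]
          ring
      _ ≤ |u x| ^ (2 * (N:ℝ) / ((N:ℝ) - 2)) * C ^ (2*α/((N:ℝ)-2)) := by
          apply mul_le_mul_of_nonneg_left _ (Real.rpow_nonneg (abs_nonneg _) _)
          exact Real.rpow_le_rpow
            (mul_nonneg (abs_nonneg _) (Real.rpow_nonneg (norm_nonneg _) _)) hNi'
            (by positivity)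
      _ = C ^ (2*α/((N:ℝ)-2)) * |u x| ^ (2 * (N:ℝ) / ((N:ℝ) - 2)) := mul_comm _ _
  -- integrability
  have hIntOn : ∀ f : EuclideanSpace ℝ (Fin N) → ℝ, Continuous f → IntegrableOn f B := by
    intro f hf
    rw [hBdef]
    exact (hf.continuousOn.integrableOn_compact
      (isCompact_closedBall (0:EuclideanSpace ℝ (Fin N)) 1)).mono_set ball_subset_closedBall
  have hcontq : Continuous (fun x : EuclideanSpace ℝ (Fin N) =>
      |u x| ^ (2 * ((N:ℝ) + α) / ((N:ℝ) - 2))) :=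
    (hu.continuous.abs).rpow_const (fun x => Or.inr hq.le)
  have hcontα : Continuous (fun x : EuclideanSpace ℝ (Fin N) => ‖x‖ ^ α) :=
    continuous_norm.rpow_const (fun x => Or.inr hα)
  have hconts : Continuous (fun x : EuclideanSpace ℝ (Fin N) =>
      |u x| ^ (2 * (N:ℝ) / ((N:ℝ) - 2))) :=
    (hu.continuous.abs).rpow_const (fun x => Or.inr (by positivity))
  have hint1 : IntegrableOn (fun x : EuclideanSpace ℝ (Fin N) =>
      |u x| ^ (2 * ((N:ℝ) + α) / ((N:ℝ) - 2)) * ‖x‖ ^ α) B :=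
    hIntOn _ (hcontq.mul hcontα)
  have hint2 : IntegrableOn (fun x : EuclideanSpace ℝ (Fin N) =>
      C ^ (2*α/((N:ℝ)-2)) * |u x| ^ (2 * (N:ℝ) / ((N:ℝ) - 2))) B :=
    hIntOn _ (continuous_const.mul hconts)
  have hstep1 : (∫ x in B, |u x| ^ (2 * ((N:ℝ) + α) / ((N:ℝ) - 2)) * ‖x‖ ^ α)
      ≤ C ^ (2*α/((N:ℝ)-2)) * ∫ x in B, |u x| ^ (2 * (N:ℝ) / ((N:ℝ) - 2)) := by
    rw [← integral_const_mul]
    exact integral_mono_ae hint1 hint2 hptwise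
  have hstep2 := hSob u hu hsupp
  have hchain : (∫ x in B, |u x| ^ (2 * ((N:ℝ) + α) / ((N:ℝ) - 2)) * ‖x‖ ^ α)
      ≤ C ^ (2*α/((N:ℝ)-2)) * (S ^ ((N:ℝ) / ((N:ℝ) - 2)) * D ^ ((N:ℝ) / ((N:ℝ) - 2))) := by
    calc (∫ x in B, |u x| ^ (2 * ((N:ℝ) + α) / ((N:ℝ) - 2)) * ‖x‖ ^ α)
        ≤ C ^ (2*α/((N:ℝ)-2)) * ∫ x in B, |u x| ^ (2 * (N:ℝ) / ((N:ℝ) - 2)) := hstep1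
      _ ≤ _ := mul_le_mul_of_nonneg_left hstep2 (Real.rpow_nonneg hC0 _)
  have hmono := Real.rpow_le_rpow hI1nonneg hchain hp.le
  refine le_trans hmono (le_of_eq ?_)
  -- final algebra
  by_cases hDz : D = 0
  · rw [hDz]
    simp [Real.zero_rpow (ne_of_gt hp),
      Real.zero_rpow (by positivity : (N:ℝ) / ((N:ℝ) - 2) ≠ 0),
      Real.zero_rpow (by norm_num : ((1:ℝ)/2) ≠ 0)]
  · have hDpos : 0 < D := lt_of_le_of_ne hD0 (Ne.symm hDz)
    have hCpos : 0 < C := Real.sqrt_pos.mpr (div_pos hDpos hApos)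
    have hLpos : 0 < (C ^ (2*α/((N:ℝ)-2)) * (S ^ ((N:ℝ) / ((N:ℝ) - 2)) * D ^ ((N:ℝ) / ((N:ℝ) - 2))))
        ^ (((N:ℝ) - 2) / (2 * ((N:ℝ) + α))) := by positivity
    have hRpos : 0 < S ^ ((N:ℝ) / (2 * ((N:ℝ) + α))) * A ^ (-(α / (2 * ((N:ℝ) + α))))
        * D ^ ((1:ℝ)/2) := by positivity
    rw [← Real.exp_log hLpos, ← Real.exp_log hRpos]
    congr 1
    rw [Real.log_rpow (by positivity), Real.log_mul (by positivity) (by positivity),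
      Real.log_mul (by positivity) (by positivity),
      Real.log_mul (by positivity) (by positivity),
      Real.log_mul (by positivity) (by positivity),
      Real.log_rpow hCpos, Real.log_rpow hS, Real.log_rpow hDpos,
      Real.log_rpow hS, Real.log_rpow hApos, Real.log_rpow hDpos,
      hCdef, Real.log_sqrt (div_nonneg hD0 hApos.le),
      Real.log_div (ne_of_gt hDpos) (ne_of_gt hApos)]
    field_simp
    ring
end
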